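/- Let q = 3^(2e+1), q' = 3^(2f+1) with q = q'^m for an odd m coprime to 3, and let p be an odd prime dividing both q'² - q' + 1 and q + 1 but not q' + 1. Then a contradiction arises; that is, no such odd prime p exists. -/
import Mathlib


theorem stmt_14 (e f m p : ℕ) (q q' : ℕ)
    (hq : q = 3 ^ (2 * e + 1)) (hq' : q' = 3 ^ (2 * f + 1))
    (hpow : q = q' ^ m) (hmodd : Odd m) (hm3 : Nat.gcd 3 m = 1)
    (hp : p.Prime) (hpodd : Odd p)
    (h1 : p ∣ q' ^ 2 - q' + 1) (h2 : p ∣ q + 1) (h3 : ¬ p ∣ q' + 1) :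
    False := by
  haveI : Fact p.Prime := ⟨hp⟩
  set x : ZMod p := (q' : ZMod p) with hx
  have hqq : q' ≤ q' ^ 2 := Nat.le_self_pow two_ne_zero q'
  have e1 : x ^ 2 - x + 1 = 0 := by
    have := (ZMod.natCast_eq_zero_iff _ p).mpr h1
    push_cast [Nat.cast_sub hqq] at this
    simpa using this
  have e2 : x ^ m = -1 := by
    have := (ZMod.natCast_eq_zero_iff _ p).mpr h2
    push_cast [hpow] at this
    linear_combination this
  have e3 : x ^ 3 = -1 := by
    have : (x + 1) * (x ^ 2 - x + 1) = x ^ 3 + 1 := by ring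
    rw [e1, mul_zero] at this
    linear_combination -this
  have h6 : x ^ 6 = 1 := by
    have : x ^ 6 = (x ^ 3) ^ 2 := by ring
    rw [this, e3]; ring
  have h2m : x ^ (2 * m) = 1 := by
    have : x ^ (2 * m) = (x ^ m) ^ 2 := by ring
    rw [this, e2]; ring
  have hod : orderOf x ∣ 2 := by
    have d1 : orderOf x ∣ 6 := orderOf_dvd_of_pow_eq_one h6
    have d2 : orderOf x ∣ 2 * m := orderOf_dvd_of_pow_eq_one h2m
    have : orderOf x ∣ Nat.gcd 6 (2 * m) := Nat.dvd_gcd d1 d2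
    have hg : Nat.gcd 6 (2 * m) = 2 := by
      have : Nat.gcd (2 * 3) (2 * m) = 2 * Nat.gcd 3 m := Nat.gcd_mul_left 2 3 m
      simpa [hm3] using this
    rwa [hg] at this
  have hx2 : x ^ 2 = 1 := orderOf_dvd_iff_pow_eq_one.mp hod
  have hx1 : x = 1 := by
    have hne : x + 1 ≠ 0 := by
      intro h
      apply h3
      rw [← ZMod.natCast_eq_zero_iff]
      push_cast
      exact h
    have : (x - 1) * (x + 1) = 0 := by rw [show (x-1)*(x+1) = x^2 - 1 by ring, hx2]; ring
    rcases mul_eq_zero.mp this with h | h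
    · exact absurd (sub_eq_zero.mp h ▸ e1) (by norm_num)
    · exact absurd h hne
  rw [hx1] at e1
  norm_num at e1
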